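/- arXiv:2411.15781 — 2 statements merged into one kernel-verified Lean document; each statement's English description precedes it below -/
import Mathlib

section
/- If α·a·F(N)·(1 − F(N)) < c < α·a·F(N̂)·(1 − F(N̂)), then there exists a unique n* in the open interval (N̂, N) satisfying the stationarity condition α·a·F(n*)·(1 − F(n*)) = c, and this n* is the unique maximizer of O on [N̂, N], i.e., O(n*) > O(n) for every n ∈ [N̂, N] with n ≠ n*. -/
/-!
On `[b, ∞)` the logistic function is at least `1/2` and increasing, so `F (1 - F)` strictly
decreases there, `p (1 - p)` being decreasing for `p ≥ 1/2`. Hence `O' = α a F (1 - F) - c` is strictly decreasing on `[N̂, N]`, changes sign by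
hypothesis, and vanishes at exactly one point `n*` (intermediate value theorem); `O` increases strictly
before `n*` and decreases strictly after it.
-/

open Set

noncomputable def logistic (a b x : ℝ) : ℝ := 1 / (1 + Real.exp (-a * (x - b)))

lemma hasDerivAt_logistic (a b x : ℝ) :
    HasDerivAt (logistic a b) (a * logistic a b x * (1 - logistic a b x)) x := by
  have hpos : 1 + Real.exp (-a * (x - b)) ≠ 0 := by positivity
  have hlin : HasDerivAt (fun x : ℝ => -a * (x - b)) (-a) x := by
    simpa using ((hasDerivAt_id x).sub_const b).const_mul (-a)
  have h : HasDerivAt (fun x => 1 / (1 + Real.exp (-a * (x - b))))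
      (-(Real.exp (-a * (x - b)) * -a) / (1 + Real.exp (-a * (x - b))) ^ 2) x := by
    simpa [one_div] using ((hlin.exp).const_add 1).fun_inv hpos
  refine h.congr_deriv ?_
  simp only [logistic]
  field_simp
  ring

lemma continuous_logistic (a b : ℝ) : Continuous (logistic a b) :=
  continuous_iff_continuousAt.2 fun x => (hasDerivAt_logistic a b x).continuousAt

lemma strictMono_logistic {a : ℝ} (ha : 0 < a) (b : ℝ) : StrictMono (logistic a b) := by
  intro x y hxy
  apply one_div_lt_one_div_of_lt (by positivity)
  have : -a * (y - b) < -a * (x - b) := by nlinarith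
  linarith [Real.exp_lt_exp.2 this]

lemma one_half_le_logistic {a b x : ℝ} (ha : 0 < a) (hx : b ≤ x) : 1 / 2 ≤ logistic a b x := by
  have hexp : Real.exp (-a * (x - b)) ≤ 1 := Real.exp_le_one_iff.2 (by nlinarith)
  rw [logistic, le_div_iff₀ (by positivity)]
  linarith

lemma mul_one_sub_lt_mul_one_sub {p q : ℝ} (hp : 1 / 2 ≤ p) (hpq : p < q) :
    q * (1 - q) < p * (1 - p) := by
  nlinarith [mul_pos (sub_pos.2 hpq) (show 0 < p + q - 1 by linarith)]

lemma strictAntiOn_logistic_mul_one_sub {a : ℝ} (ha : 0 < a) (b : ℝ) :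
    StrictAntiOn (fun x => logistic a b x * (1 - logistic a b x)) (Ici b) :=
  fun _ hx _ _ hxy =>
    mul_one_sub_lt_mul_one_sub (one_half_le_logistic ha hx) (strictMono_logistic ha b hxy)

lemma lt_of_hasDerivAt_of_strictAntiOn {f f' : ℝ → ℝ} {l r m : ℝ}
    (hf : ∀ x ∈ Icc l r, HasDerivAt f (f' x) x) (hf' : StrictAntiOn f' (Icc l r))
    (hm : m ∈ Icc l r) (hm0 : f' m = 0) :
    ∀ x ∈ Icc l r, x ≠ m → f x < f m := by
  have hcont : ContinuousOn f (Icc l r) := fun x hx => (hf x hx).continuousAt.continuousWithinAt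
  have hmono : StrictMonoOn f (Icc l m) := by
    refine strictMonoOn_of_deriv_pos (convex_Icc l m)
      (hcont.mono (Icc_subset_Icc_right hm.2)) fun x hx => ?_
    rw [interior_Icc] at hx
    have hx' : x ∈ Icc l r := ⟨hx.1.le, hx.2.le.trans hm.2⟩
    rw [(hf x hx').deriv, ← hm0]
    exact hf' hx' hm hx.2
  have hanti : StrictAntiOn f (Icc m r) := by
    refine strictAntiOn_of_deriv_neg (convex_Icc m r)
      (hcont.mono (Icc_subset_Icc_left hm.1)) fun x hx => ?_
    rw [interior_Icc] at hx
    have hx' : x ∈ Icc l r := ⟨hm.1.trans hx.1.le, hx.2.le⟩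
    rw [(hf x hx').deriv, ← hm0]
    exact hf' hm hx' hx.1
  intro x hx hxm
  rcases hxm.lt_or_gt with hlt | hgt
  · exact hmono ⟨hx.1, hlt.le⟩ ⟨hm.1, le_rfl⟩ hlt
  · exact hanti ⟨le_rfl, hm.2⟩ ⟨hgt.le, hx.2⟩ hgt

/-- If `α·a·F(N)·(1 − F(N)) < c < α·a·F(N̂)·(1 − F(N̂))`, then
there exists a unique `n*` in the open interval `(N̂, N)` satisfying the
stationarity condition `α·a·F(n*)·(1 − F(n*)) = c`, and this `n*` is the unique
maximizer of `O` on `[N̂, N]`. Here `O(n) = α·F(n) − c·n + Γ`,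
`F(x) = 1/(1 + exp(−a·(x − b)))`, `a > 0`, `α > 0`, `b < N̂ < N`. -/
theorem interior_stationary_maximizer (a b α c Γ Nhat N : ℝ)
    (ha : 0 < a) (hα : 0 < α) (hbN : b < Nhat) (hNN : Nhat < N)
    (F O : ℝ → ℝ)
    (hF : ∀ x, F x = 1 / (1 + Real.exp (-a * (x - b))))
    (hO : ∀ n, O n = α * F n - c * n + Γ)
    (hc1 : α * a * F N * (1 - F N) < c)
    (hc2 : c < α * a * F Nhat * (1 - F Nhat)) :
    ∃! nstar : ℝ, nstar ∈ Set.Ioo Nhat N ∧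
      α * a * F nstar * (1 - F nstar) = c ∧
      ∀ n ∈ Set.Icc Nhat N, n ≠ nstar → O n < O nstar := by
  obtain rfl : F = logistic a b := funext hF
  obtain rfl : O = fun n => α * logistic a b n - c * n + Γ := funext hO
  let O' := fun x => α * a * logistic a b x * (1 - logistic a b x) - c
  have hderiv : ∀ x, HasDerivAt (fun n => α * logistic a b n - c * n + Γ) (O' x) x := fun x => by
    refine ((((hasDerivAt_logistic a b x).const_mul α).fun_sub
      ((hasDerivAt_id' x).const_mul c)).add_const Γ).congr_deriv ?_
    simp only [O']
    ring
  have hO'_anti : StrictAntiOn O' (Icc Nhat N) := fun x hx y hy hxy => by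
    have := strictAntiOn_logistic_mul_one_sub ha b (hbN.le.trans hx.1) (hbN.le.trans hy.1) hxy
    simp only [O', mul_assoc]
    gcongr
  have hcont := continuous_logistic a b
  obtain ⟨nstar, hmem, hstat⟩ := intermediate_value_Ioo' hNN.le
    (by fun_prop : Continuous fun x => α * a * logistic a b x * (1 - logistic a b x)).continuousOn
    ⟨hc1, hc2⟩
  have hmax := lt_of_hasDerivAt_of_strictAntiOn (fun x _ => hderiv x) hO'_anti
    (Ioo_subset_Icc_self hmem) (sub_eq_zero.2 hstat)
  refine ⟨nstar, ⟨hmem, hstat, hmax⟩, fun m ⟨hm, _, hmmax⟩ => ?_⟩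
  by_contra hne
  exact (hmax m (Ioo_subset_Icc_self hm) hne).asymm
    (hmmax nstar (Ioo_subset_Icc_self hmem) (Ne.symm hne))
end

section
/- (Monotone comparative statics in the emphasis weight) Suppose c > 0 and α₁ < α₂ are both in the interior regime, i.e., αⱼ·a·F(N)·(1 − F(N)) < c < αⱼ·a·F(N̂)·(1 − F(N̂)) for j = 1, 2, and let n*₁, n*₂ ∈ (N̂, N) be the corresponding unique solutions of αⱼ·a·F(n*ⱼ)·(1 − F(n*ⱼ)) = c. Then n*₁ < n*₂: a larger emphasis weight α on personalized accuracy yields a strictly larger optimal split point, i.e., strictly fewer offloaded denoising steps. -/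
open Real Set

/- The stationarity condition says `αⱼ · a · s(n*ⱼ) = c` with `s = F · (1 - F)`. On `(b, ∞)` the
logistic function exceeds `1/2` and increases, and `u ↦ u (1 - u)` decreases on `[1/2, ∞)`, so `s`
strictly decreases there. Raising the weight from `α₁` to `α₂` therefore forces `s(n*₂) < s(n*₁)`,
that is `n*₁ < n*₂`. -/

theorem strictAntiOn_mul_one_sub : StrictAntiOn (fun u : ℝ => u * (1 - u)) (Ici (1 / 2)) := by
  intro u hu v hv huv
  simp only [mem_Ici] at hu hv
  nlinarith

theorem strictAntiOn_sigmoid_mul_one_sub_sigmoid :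
    StrictAntiOn (fun x => sigmoid x * (1 - sigmoid x)) (Ici 0) := by
  refine strictAntiOn_mul_one_sub.comp_strictMonoOn (sigmoid_strictMono.strictMonoOn _) ?_
  intro x hx
  have : sigmoid 0 ≤ sigmoid x := sigmoid_le hx
  rwa [sigmoid_zero, ← one_div] at this

theorem strictAntiOn_sigmoid_affine_mul_one_sub {a : ℝ} (ha : 0 < a) (b : ℝ) :
    StrictAntiOn (fun x => sigmoid (a * (x - b)) * (1 - sigmoid (a * (x - b)))) (Ici b) := by
  refine strictAntiOn_sigmoid_mul_one_sub_sigmoid.comp_strictMonoOn ?_ ?_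
  · intro x _ y _ hxy
    simp only
    gcongr
  · intro x hx
    exact mul_nonneg ha.le (sub_nonneg.mpr hx)

theorem sigmoid_mul_one_sub_sigmoid_pos (x : ℝ) : 0 < sigmoid x * (1 - sigmoid x) :=
  mul_pos (sigmoid_pos x) (sub_pos.mpr (sigmoid_lt_one x))

theorem StrictAntiOn.lt_of_mul_eq_mul {g : ℝ → ℝ} {s : Set ℝ} (hg : StrictAntiOn g s)
    {x₁ x₂ α₁ α₂ : ℝ} (hx₁ : x₁ ∈ s) (hx₂ : x₂ ∈ s) (hgx₂ : 0 < g x₂) (hα₁ : 0 < α₁)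
    (hα : α₁ < α₂) (h : α₁ * g x₁ = α₂ * g x₂) : x₁ < x₂ := by
  have : α₁ * g x₂ < α₁ * g x₁ := by
    rw [h]
    exact mul_lt_mul_of_pos_right hα hgx₂
  exact (hg.lt_iff_gt hx₂ hx₁).mp (lt_of_mul_lt_mul_left this hα₁.le)

theorem splitpoint_increasing_in_alpha_general (a b c Nhat N α₁ α₂ n₁ n₂ : ℝ)
    (ha : 0 < a) (hbN : b < Nhat)
    (hα₁ : 0 < α₁) (hαlt : α₁ < α₂)
    (F : ℝ → ℝ)
    (hF : ∀ x, F x = 1 / (1 + Real.exp (-a * (x - b))))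
    (hn₁ : n₁ ∈ Set.Ioo Nhat N) (hn₂ : n₂ ∈ Set.Ioo Nhat N)
    (hstat₁ : α₁ * a * F n₁ * (1 - F n₁) = c)
    (hstat₂ : α₂ * a * F n₂ * (1 - F n₂) = c) :
    n₁ < n₂ := by
  have hF_sigmoid : ∀ x, F x = sigmoid (a * (x - b)) := fun x => by
    rw [hF, sigmoid_def, one_div, neg_mul]
  have hmem : ∀ n ∈ Ioo Nhat N, n ∈ Ici b := fun n hn => (hbN.trans hn.1).le
  refine (strictAntiOn_sigmoid_affine_mul_one_sub ha b).lt_of_mul_eq_mul (hmem n₁ hn₁)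
    (hmem n₂ hn₂) (sigmoid_mul_one_sub_sigmoid_pos _) (mul_pos hα₁ ha)
    (mul_lt_mul_of_pos_right hαlt ha) ?_
  simp only [← hF_sigmoid, ← mul_assoc]
  rw [hstat₁, hstat₂]

/-- Monotone comparative statics in the emphasis weight:
Suppose `c > 0` and `α₁ < α₂` are both in the interior regime, i.e.
`αⱼ·a·F(N)·(1 − F(N)) < c < αⱼ·a·F(N̂)·(1 − F(N̂))` for `j = 1, 2`, and let
`n*₁, n*₂ ∈ (N̂, N)` solve `αⱼ·a·F(n*ⱼ)·(1 − F(n*ⱼ)) = c`. Then `n*₁ < n*₂`: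
a larger emphasis weight yields a strictly larger optimal split point, i.e.
strictly fewer offloaded denoising steps. Here
`F(x) = 1/(1 + exp(−a·(x − b)))`, `a > 0`, `b < N̂ < N`. -/
theorem splitpoint_increasing_in_alpha (a b c Nhat N α₁ α₂ n₁ n₂ : ℝ)
    (ha : 0 < a) (hbN : b < Nhat) (hNN : Nhat < N) (hc : 0 < c)
    (hα₁ : 0 < α₁) (hα₂ : 0 < α₂) (hαlt : α₁ < α₂)
    (F : ℝ → ℝ)
    (hF : ∀ x, F x = 1 / (1 + Real.exp (-a * (x - b))))
    (hreg₁ : α₁ * a * F N * (1 - F N) < c ∧ c < α₁ * a * F Nhat * (1 - F Nhat))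
    (hreg₂ : α₂ * a * F N * (1 - F N) < c ∧ c < α₂ * a * F Nhat * (1 - F Nhat))
    (hn₁ : n₁ ∈ Set.Ioo Nhat N) (hn₂ : n₂ ∈ Set.Ioo Nhat N)
    (hstat₁ : α₁ * a * F n₁ * (1 - F n₁) = c)
    (hstat₂ : α₂ * a * F n₂ * (1 - F n₂) = c) :
    n₁ < n₂ :=
  splitpoint_increasing_in_alpha_general a b c Nhat N α₁ α₂ n₁ n₂ ha hbN hα₁ hαlt F hF hn₁ hn₂
    hstat₁ hstat₂
end
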